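/- arXiv:2009.01800 — 7 statements merged into one kernel-verified Lean document; each statement's English description precedes it below -/
import Mathlib

section
/- For the concomitant of the rth order statistic in the Morgenstern family, the inaccuracy satisfies I(f_{Y_{[r:n]}}, f_Y) = H(Y) + (3(n−2r+1)/(2(n+1)))·[I(f_{Y_{[1:2]}}, f_Y) − I(f_{Y_{[2:2]}}, f_Y)]. -/
open MeasureTheory Real Set

/-- For the concomitant of the rth order statistic in the Morgenstern family,
`I(f_{Y[r:n]}, f_Y) = H(Y) + (3(n−2r+1)/(2(n+1))) (I(f_{Y[1:2]}, f_Y) − I(f_{Y[2:2]}, f_Y))`. -/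
theorem stmt_3 (f F : ℝ → ℝ) (α : ℝ) (hα : |α| ≤ 1)
    (n r : ℕ) (hr1 : 1 ≤ r) (hrn : r ≤ n)
    (frn : ℕ → ℕ → ℝ → ℝ)
    (hfrn : ∀ r n y, frn r n y
      = f y * (1 + α * (((n : ℝ) - 2 * r + 1) / ((n : ℝ) + 1)) * (1 - 2 * F y)))
    (I : (ℝ → ℝ) → ℝ) (hI : ∀ g, I g = -∫ y in Ioi (0:ℝ), g y * log (f y))
    (H : ℝ) (hH : H = -∫ y in Ioi (0:ℝ), f y * log (f y))
    (hint : IntegrableOn (fun y => f y * log (f y)) (Ioi 0))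
    (hint2 : IntegrableOn (fun y => f y * F y * log (f y)) (Ioi 0)) :
    I (frn r n) = H + (3 * ((n : ℝ) - 2 * r + 1) / (2 * ((n : ℝ) + 1)))
      * (I (frn 1 2) - I (frn 2 2)) := by
  have key : ∀ c : ℝ, (∫ y in Ioi (0:ℝ), f y * (1 + α * c * (1 - 2 * F y)) * log (f y))
      = (1 + α * c) * (∫ y in Ioi (0:ℝ), f y * log (f y))
        - 2 * α * c * (∫ y in Ioi (0:ℝ), f y * F y * log (f y)) := by
    intro c
    have h : ∀ y, f y * (1 + α * c * (1 - 2 * F y)) * log (f y)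
        = (1 + α * c) * (f y * log (f y)) - 2 * α * c * (f y * F y * log (f y)) := by
      intro y; ring
    simp_rw [h]
    rw [integral_sub (hint.const_mul _) (hint2.const_mul _),
      MeasureTheory.integral_const_mul, MeasureTheory.integral_const_mul]
  have hIc : ∀ (r n : ℕ), I (frn r n)
      = -((1 + α * (((n : ℝ) - 2 * r + 1) / ((n : ℝ) + 1)))
            * (∫ y in Ioi (0:ℝ), f y * log (f y))
          - 2 * α * (((n : ℝ) - 2 * r + 1) / ((n : ℝ) + 1))
            * (∫ y in Ioi (0:ℝ), f y * F y * log (f y))) := by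
    intro r n
    rw [hI]
    simp_rw [hfrn]
    rw [key]
  rw [hIc, hIc, hIc, hH]
  set A := ∫ y in Ioi (0:ℝ), f y * log (f y)
  set B := ∫ y in Ioi (0:ℝ), f y * F y * log (f y)
  have hn : ((n : ℝ) + 1) ≠ 0 := by positivity
  push_cast
  field_simp
  ring
end

section
/- In the Morgenstern family, for any integer λ ≥ 1, I(f_{Y_{[r:n]}}, f_Y) = I(f_{Y_{[rλ:(n+1)λ−1]}}, f_Y), i.e., the inaccuracy of the concomitant of the rth order statistic from a sample of size n equals that of the (rλ)th concomitant from a sample of size (n+1)λ − 1. -/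
open MeasureTheory Real Set

/-- In the Morgenstern family, for any integer `λ ≥ 1`,
`I(f_{Y[r:n]}, f_Y) = I(f_{Y[rλ:(n+1)λ−1]}, f_Y)`. -/
theorem stmt_5 (f F : ℝ → ℝ) (α : ℝ) (hα : |α| ≤ 1)
    (n r lam : ℕ) (hr1 : 1 ≤ r) (hrn : r ≤ n) (hlam : 1 ≤ lam)
    (frn : ℕ → ℕ → ℝ → ℝ)
    (hfrn : ∀ r n y, frn r n y
      = f y * (1 + α * (((n : ℝ) - 2 * r + 1) / ((n : ℝ) + 1)) * (1 - 2 * F y)))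
    (I : (ℝ → ℝ) → ℝ) (hI : ∀ g, I g = -∫ y in Ioi (0:ℝ), g y * log (f y)) :
    I (frn r n) = I (frn (r * lam) ((n + 1) * lam - 1)) := by
  have hfun : frn r n = frn (r * lam) ((n + 1) * lam - 1) := by
    funext y
    rw [hfrn, hfrn]
    have h1 : (1 : ℕ) ≤ (n + 1) * lam := le_trans hlam (Nat.le_mul_of_pos_left lam (Nat.succ_pos n))
    have hc : (((n + 1) * lam - 1 : ℕ) : ℝ) = ((n : ℝ) + 1) * (lam : ℝ) - 1 := by
      push_cast [Nat.cast_sub h1]; ring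
    have hc2 : ((r * lam : ℕ) : ℝ) = (r : ℝ) * (lam : ℝ) := by push_cast; ring
    rw [hc, hc2]
    have hlamR : (1 : ℝ) ≤ (lam : ℝ) := by exact_mod_cast hlam
    have hlam0 : (lam : ℝ) ≠ 0 := by linarith
    have hn1 : ((n : ℝ) + 1) ≠ 0 := by positivity
    have hd : ((n : ℝ) + 1) * (lam : ℝ) - 1 + 1 ≠ 0 := by
      have : ((n : ℝ) + 1) * (lam : ℝ) - 1 + 1 = ((n : ℝ) + 1) * lam := by ring
      rw [this]; positivity
    have key : (((n : ℝ) + 1) * lam - 1 - 2 * ((r : ℝ) * lam) + 1) / (((n : ℝ) + 1) * lam - 1 + 1)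
        = ((n : ℝ) - 2 * r + 1) / ((n : ℝ) + 1) := by
      field_simp
      ring
    rw [key]
  rw [hfun]
end

section
/- For the exponential distribution with mean θ₂, the difference A_α(n) := I(f_{Y_{[n:n]}}, f_Y) − I(f_{Y_{[1:n]}}, f_Y) = α(n−1)/(n+1), which is positive when 0 < α ≤ 1 and n > 1, negative when −1 ≤ α < 0 and n > 1, and zero when n = 1 or α = 0. -/
/-!
Since `log f_Y(y) = -log θ₂ - y / θ₂` is affine in `y`, the cross entropy `I(g, f_Y)` only depends
on the first two moments of `g`. The density `f_Y (1 + c (1 - 2 F_Y))` is the mixture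
`(1 - c) Exp(θ₂) + c Exp(θ₂ / 2)`, so its moments are explicit Gamma integrals and
`I(g, f_Y) = log θ₂ + 1 - c / 2`; `A` is then half the difference of the two values of `c`.
-/

open MeasureTheory Real Set
open scoped Nat

theorem integral_pow_mul_exp_neg_mul_Ioi (k : ℕ) {c : ℝ} (hc : 0 < c) :
    ∫ x in Ioi (0 : ℝ), x ^ k * exp (-(c * x)) = k ! / c ^ (k + 1) := by
  have key := integral_rpow_mul_exp_neg_mul_Ioi (by positivity : (0 : ℝ) < k + 1) hc
  simp only [add_sub_cancel_right, rpow_natCast] at key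
  rw [key, Gamma_nat_eq_factorial, ← Nat.cast_succ, rpow_natCast, one_div, inv_pow,
    inv_mul_eq_div]

theorem integrableOn_pow_mul_exp_neg_mul_Ioi (k : ℕ) {c : ℝ} (hc : 0 < c) :
    IntegrableOn (fun x => x ^ k * exp (-(c * x))) (Ioi 0) :=
  .of_integral_ne_zero (by rw [integral_pow_mul_exp_neg_mul_Ioi k hc]; positivity)

/-- `f_Y(y) [1 + c (1 - 2 F_Y(y))]` for the exponential law with mean `θ`; the density of `Y_{[r:n]}`
is the case `c = α (n - 2r + 1) / (n + 1)`. -/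
noncomputable def tiltedExpDensity (θ c y : ℝ) : ℝ :=
  θ⁻¹ * exp (-y / θ) * (1 + c * (1 - 2 * (1 - exp (-y / θ))))

theorem pow_mul_tiltedExpDensity (k : ℕ) (θ c y : ℝ) :
    y ^ k * tiltedExpDensity θ c y
      = (1 - c) * θ⁻¹ * (y ^ k * exp (-(θ⁻¹ * y)))
        + 2 * c * θ⁻¹ * (y ^ k * exp (-(2 * θ⁻¹ * y))) := by
  have hexp : exp (-(2 * θ⁻¹ * y)) = exp (-(θ⁻¹ * y)) ^ 2 := by
    rw [← exp_nat_mul]; ring_nf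
  rw [tiltedExpDensity, hexp, neg_div, div_eq_inv_mul]
  ring

theorem integrableOn_pow_mul_tiltedExpDensity (k : ℕ) {θ : ℝ} (hθ : 0 < θ) (c : ℝ) :
    IntegrableOn (fun y => y ^ k * tiltedExpDensity θ c y) (Ioi 0) := by
  simp_rw [pow_mul_tiltedExpDensity]
  exact ((integrableOn_pow_mul_exp_neg_mul_Ioi k (by positivity)).const_mul _).add
    ((integrableOn_pow_mul_exp_neg_mul_Ioi k (by positivity)).const_mul _)

theorem integral_pow_mul_tiltedExpDensity (k : ℕ) {θ : ℝ} (hθ : 0 < θ) (c : ℝ) :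
    ∫ y in Ioi (0 : ℝ), y ^ k * tiltedExpDensity θ c y = k ! * θ ^ k * (1 - c + c / 2 ^ k) := by
  simp_rw [pow_mul_tiltedExpDensity]
  rw [integral_add ((integrableOn_pow_mul_exp_neg_mul_Ioi k (by positivity)).const_mul _)
      ((integrableOn_pow_mul_exp_neg_mul_Ioi k (by positivity)).const_mul _),
    integral_const_mul, integral_const_mul, integral_pow_mul_exp_neg_mul_Ioi k (by positivity),
    integral_pow_mul_exp_neg_mul_Ioi k (by positivity), mul_pow, inv_pow, pow_succ, pow_succ]
  field_simp

theorem integral_tiltedExpDensity_mul_log {θ : ℝ} (hθ : 0 < θ) (c : ℝ) :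
    ∫ y in Ioi (0 : ℝ), tiltedExpDensity θ c y * log (θ⁻¹ * exp (-y / θ))
      = -(log θ + 1 - c / 2) := by
  have hlog (y : ℝ) : tiltedExpDensity θ c y * log (θ⁻¹ * exp (-y / θ))
      = -log θ * (y ^ 0 * tiltedExpDensity θ c y) - θ⁻¹ * (y ^ 1 * tiltedExpDensity θ c y) := by
    rw [log_mul (inv_ne_zero hθ.ne') (exp_ne_zero _), log_inv, log_exp]
    ring
  simp_rw [hlog]
  rw [integral_sub ((integrableOn_pow_mul_tiltedExpDensity 0 hθ c).const_mul _)
      ((integrableOn_pow_mul_tiltedExpDensity 1 hθ c).const_mul _),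
    integral_const_mul, integral_const_mul, integral_pow_mul_tiltedExpDensity 0 hθ,
    integral_pow_mul_tiltedExpDensity 1 hθ]
  field_simp
  ring

theorem stmt_7_general (θ₂ α : ℝ) (hθ : 0 < θ₂)
    (n : ℕ)
    (f F : ℝ → ℝ)
    (hf : ∀ y, f y = θ₂⁻¹ * exp (-y / θ₂))
    (hF : ∀ y, F y = 1 - exp (-y / θ₂))
    (frn : ℕ → ℕ → ℝ → ℝ)
    (hfrn : ∀ r n y, frn r n y
      = f y * (1 + α * (((n : ℝ) - 2 * r + 1) / ((n : ℝ) + 1)) * (1 - 2 * F y)))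
    (I : (ℝ → ℝ) → ℝ) (hI : ∀ g, I g = -∫ y in Ioi (0:ℝ), g y * log (f y))
    (A : ℝ) (hA : A = I (frn n n) - I (frn 1 n)) :
    A = α * ((n : ℝ) - 1) / ((n : ℝ) + 1)
    ∧ (0 < α → 1 < n → 0 < A)
    ∧ (α < 0 → 1 < n → A < 0)
    ∧ (n = 1 ∨ α = 0 → A = 0) := by
  have hI_frn (r : ℕ) :
      I (frn r n) = log θ₂ + 1 - α * (((n : ℝ) - 2 * r + 1) / ((n : ℝ) + 1)) / 2 := by
    have hfrn_eq :
        frn r n = tiltedExpDensity θ₂ (α * (((n : ℝ) - 2 * r + 1) / ((n : ℝ) + 1))) := by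
      funext y; rw [hfrn, hf, hF, tiltedExpDensity]
    simp only [hI, hfrn_eq, hf, integral_tiltedExpDensity_mul_log hθ, neg_neg]
  have hA_eq : A = α * ((n : ℝ) - 1) / ((n : ℝ) + 1) := by
    rw [hA, hI_frn, hI_frn]
    field_simp
    ring
  have hn1 : 1 < n → (0 : ℝ) < n - 1 := fun h => sub_pos.mpr (Nat.one_lt_cast.mpr h)
  refine ⟨hA_eq, fun hα h => hA_eq ▸ div_pos (mul_pos hα (hn1 h)) (by positivity),
    fun hα h => hA_eq ▸ div_neg_of_neg_of_pos (mul_neg_of_neg_of_pos hα (hn1 h)) (by positivity),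
    ?_⟩
  rintro (rfl | rfl) <;> simp [hA_eq]

/-- For the exponential distribution with mean θ₂,
`A_α(n) = I(f_{Y[n:n]}, f_Y) − I(f_{Y[1:n]}, f_Y) = α(n−1)/(n+1)`, which is positive
for `0 < α ≤ 1, n > 1`, negative for `−1 ≤ α < 0, n > 1`, and zero if `n = 1` or `α = 0`. -/
theorem stmt_7 (θ₂ α : ℝ) (hθ : 0 < θ₂) (hα : |α| ≤ 1)
    (n : ℕ) (hn : 1 ≤ n)
    (f F : ℝ → ℝ)
    (hf : ∀ y, f y = θ₂⁻¹ * exp (-y / θ₂))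
    (hF : ∀ y, F y = 1 - exp (-y / θ₂))
    (frn : ℕ → ℕ → ℝ → ℝ)
    (hfrn : ∀ r n y, frn r n y
      = f y * (1 + α * (((n : ℝ) - 2 * r + 1) / ((n : ℝ) + 1)) * (1 - 2 * F y)))
    (I : (ℝ → ℝ) → ℝ) (hI : ∀ g, I g = -∫ y in Ioi (0:ℝ), g y * log (f y))
    (A : ℝ) (hA : A = I (frn n n) - I (frn 1 n)) :
    A = α * ((n : ℝ) - 1) / ((n : ℝ) + 1)
    ∧ (0 < α → 1 < n → 0 < A)
    ∧ (α < 0 → 1 < n → A < 0)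
    ∧ (n = 1 ∨ α = 0 → A = 0) :=
  stmt_7_general θ₂ α hθ n f F hf hF frn hfrn I hI A hA
end

section
/- For the Morgenstern type bivariate uniform distribution on (0,θ₁)×(0,θ₂), the cumulative past inaccuracy I(F_{Y_{[r:n]}}, F_Y) = θ₂/4 + α((n−2r+1)/(n+1))·(5θ₂/36). In particular CE(Y) = θ₂/4 and ∫₀^{θ₂} F²(y) log F(y) dy = −θ₂/9 for Y uniform on (0,θ₂). -/
open MeasureTheory Real Set

/-!
Since `F = 1` on `[θ₂, ∞)` and `log 1 = 0`, every integrand vanishes there, and the substitution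
`u = y / θ₂` turns each integral into `θ₂` times an integral over `(0, 1)`. The integrand is then
a combination of `u ^ (m + 1) * log u`, whose integral over `(0, 1)` is `-1 / (m + 2) ^ 2`
(antiderivative `u ^ (m + 2) * (log u / (m + 2) - 1 / (m + 2) ^ 2)`).
-/

lemma continuous_pow_succ_mul_log (m : ℕ) : Continuous fun u : ℝ => u ^ (m + 1) * log u :=
  ((continuous_pow m).mul continuous_mul_log).congr fun u => by simp only [Pi.mul_apply]; ring

lemma integral_pow_succ_mul_log_zero_one (m : ℕ) :
    ∫ u in (0 : ℝ)..1, u ^ (m + 1) * log u = -1 / ((m : ℝ) + 2) ^ 2 := by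
  have hm : (m : ℝ) + 2 ≠ 0 := by positivity
  let H : ℝ → ℝ := fun u => u ^ (m + 2) * log u / ((m : ℝ) + 2) - u ^ (m + 2) / ((m : ℝ) + 2) ^ 2
  have hH_cont : ContinuousOn H (Icc 0 1) :=
    (((continuous_pow_succ_mul_log (m + 1)).div_const _).sub
      ((continuous_pow (m + 2)).div_const _)).continuousOn
  have hH_deriv : ∀ x ∈ Ioo (0 : ℝ) 1, HasDerivAt H (x ^ (m + 1) * log x) x := by
    intro x hx
    have := (((hasDerivAt_pow (m + 2) x).mul (hasDerivAt_log hx.1.ne')).div_const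
      ((m : ℝ) + 2)).sub ((hasDerivAt_pow (m + 2) x).div_const (((m : ℝ) + 2) ^ 2))
    refine this.congr_deriv ?_
    have hx0 := hx.1.ne'
    rw [show m + 2 - 1 = m + 1 from rfl]
    push_cast
    field_simp
    ring
  rw [intervalIntegral.integral_eq_sub_of_hasDerivAt_of_le zero_le_one hH_cont hH_deriv
    ((continuous_pow_succ_mul_log m).intervalIntegrable 0 1)]
  simp only [H, one_pow, log_one, mul_zero, zero_div, zero_sub, zero_pow (by omega : m + 2 ≠ 0),
    log_zero, sub_zero]
  field_simp

lemma integral_Ioi_comp_min_div_one {θ : ℝ} (hθ : 0 < θ) {g : ℝ → ℝ} (hg : g 1 = 0) :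
    ∫ y in Ioi 0, g (min (y / θ) 1) = θ * ∫ u in (0 : ℝ)..1, g u := by
  have h_tail : ∀ y ∈ Ioi 0 \ Ioc 0 θ, g (min (y / θ) 1) = 0 := by
    rintro y ⟨hy0, hyθ⟩
    have : 1 ≤ y / θ := (one_le_div hθ).2 (le_of_not_ge fun h => hyθ ⟨hy0, h⟩)
    rw [min_eq_right this, hg]
  have h_body : EqOn (fun y => g (min (y / θ) 1)) (fun y => g (y / θ)) (Ioc 0 θ) :=
    fun y hy => by simp only [min_eq_left ((div_le_one hθ).2 hy.2)]
  rw [setIntegral_eq_of_subset_of_forall_sdiff_eq_zero measurableSet_Ioi Ioc_subset_Ioi_self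
    h_tail, setIntegral_congr_fun measurableSet_Ioc h_body,
    ← intervalIntegral.integral_of_le hθ.le, intervalIntegral.integral_comp_div _ hθ.ne',
    zero_div, div_self hθ.ne', smul_eq_mul]

lemma integral_Ioi_min_div_one_pow_succ_mul_log {θ : ℝ} (hθ : 0 < θ) (m : ℕ) :
    ∫ y in Ioi 0, min (y / θ) 1 ^ (m + 1) * log (min (y / θ) 1) = -θ / ((m : ℝ) + 2) ^ 2 := by
  rw [integral_Ioi_comp_min_div_one hθ (g := fun u => u ^ (m + 1) * log u) (by simp),
    integral_pow_succ_mul_log_zero_one]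
  ring

theorem stmt_14_general (θ₂ α : ℝ) (hθ : 0 < θ₂)
    (n r : ℕ)
    (F : ℝ → ℝ) (hF : ∀ y, F y = min (y / θ₂) 1)
    (G : ℝ → ℝ)
    (hG : ∀ y, G y = F y * (1 + α * (((n : ℝ) - 2 * r + 1) / ((n : ℝ) + 1)) * (1 - F y))) :
    (-∫ y in Ioi (0:ℝ), G y * log (F y)
        = θ₂ / 4 + α * (((n : ℝ) - 2 * r + 1) / ((n : ℝ) + 1)) * (5 * θ₂ / 36))
    ∧ (-∫ y in Ioi (0:ℝ), F y * log (F y) = θ₂ / 4)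
    ∧ (∫ y in Ioi (0:ℝ), (F y) ^ 2 * log (F y) = -θ₂ / 9) := by
  set c := α * (((n : ℝ) - 2 * r + 1) / ((n : ℝ) + 1))
  have hF_int (m : ℕ) : ∫ y in Ioi 0, F y ^ (m + 1) * log (F y) = -θ₂ / ((m : ℝ) + 2) ^ 2 := by
    simp only [hF]
    exact integral_Ioi_min_div_one_pow_succ_mul_log hθ m
  refine ⟨?_, ?_, (hF_int 1).trans (by norm_num)⟩
  · have hGlog (y : ℝ) :
        G y * log (F y) = (1 + c) * (F y ^ 1 * log (F y)) - c * (F y ^ 2 * log (F y)) := by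
      rw [hG]; ring
    simp only [hGlog]
    simp only [hF]
    rw [integral_Ioi_comp_min_div_one hθ
        (g := fun u => (1 + c) * (u ^ 1 * log u) - c * (u ^ 2 * log u)) (by simp),
      intervalIntegral.integral_sub, intervalIntegral.integral_const_mul,
      intervalIntegral.integral_const_mul, integral_pow_succ_mul_log_zero_one 0,
      integral_pow_succ_mul_log_zero_one 1]
    · norm_num
      ring
    all_goals exact ((continuous_pow_succ_mul_log _).intervalIntegrable 0 1).const_mul _
  · have h_one := hF_int 0
    norm_num at h_one
    rw [h_one]
    ring

/-- For the Morgenstern type bivariate uniform distribution (Y uniform on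
`(0, θ₂)`), `I(F_{Y[r:n]}, F_Y) = θ₂/4 + α((n−2r+1)/(n+1)) (5θ₂/36)`; in particular
`CE(Y) = θ₂/4` and `∫₀^∞ F² log F = −θ₂/9`. -/
theorem stmt_14 (θ₂ α : ℝ) (hθ : 0 < θ₂) (hα : |α| ≤ 1)
    (n r : ℕ) (hr1 : 1 ≤ r) (hrn : r ≤ n)
    (F : ℝ → ℝ) (hF : ∀ y, F y = min (y / θ₂) 1)
    (G : ℝ → ℝ)
    (hG : ∀ y, G y = F y * (1 + α * (((n : ℝ) - 2 * r + 1) / ((n : ℝ) + 1)) * (1 - F y))) :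
    (-∫ y in Ioi (0:ℝ), G y * log (F y)
        = θ₂ / 4 + α * (((n : ℝ) - 2 * r + 1) / ((n : ℝ) + 1)) * (5 * θ₂ / 36))
    ∧ (-∫ y in Ioi (0:ℝ), F y * log (F y) = θ₂ / 4)
    ∧ (∫ y in Ioi (0:ℝ), (F y) ^ 2 * log (F y) = -θ₂ / 9) :=
  stmt_14_general θ₂ α hθ n r F hF G hG
end

section
/- For the exponential distribution with mean θ₂, I(F_{Y_{[r:n]}}, F_Y) = (π²/6 − 1)θ₂ + (αθ₂/4)·(n−2r+1)/(n+1). In particular CE(Y) = (π²/6 − 1)θ₂ and −∫₀^∞ F²(y) log F(y) dy = (π²/6 − 5/4)θ₂. -/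
/-!
With `u = exp (-y / θ)` we have `F = 1 - u` and `-F log F = negMulLog (1 - u)`, while
`G log F = (1 + c u) F log F` with `c = α (n - 2r + 1) / (n + 1)`, and
`F² log F = (1 - u) F log F`. So everything reduces to the two integrals
`∫ uʲ negMulLog (1 - u) dy` for `j = 0, 1`. Expanding
`negMulLog (1 - u) = (1 - u) ∑ uᵏ⁺¹ / (k + 1)` and integrating termwise with
`∫₀^∞ uᵐ dy = θ / m` turns them into
`θ ∑ 1 / ((k + 1)(k + j + 1)(k + j + 2))`, which is `θ (ζ(2) - 1)` for `j = 0` by partial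
fractions, and the telescoping sum `θ / 4` for `j = 1`. Termwise integration is justified since
all terms are nonnegative, and integrability follows from `negMulLog (1 - u) ≤ u`.
-/

open MeasureTheory Real Set Filter Topology

section Series

lemma hasSum_sub_succ_of_antitone {f : ℕ → ℝ} (hf : Antitone f)
    (hf0 : Tendsto f atTop (𝓝 0)) :
    HasSum (fun k => f k - f (k + 1)) (f 0) := by
  rw [hasSum_iff_tendsto_nat_of_nonneg (fun k => sub_nonneg.2 (hf k.le_succ))]
  simp_rw [Finset.sum_range_sub']
  simpa using (tendsto_const_nhds (x := f 0)).sub hf0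

lemma hasSum_one_div_succ_sq : HasSum (fun k : ℕ => 1 / ((k : ℝ) + 1) ^ 2) (π ^ 2 / 6) := by
  simpa using (hasSum_nat_add_iff' (f := fun k : ℕ => 1 / (k : ℝ) ^ 2) 1).2 hasSum_zeta_two

lemma hasSum_one_div_succ_mul_succ_succ :
    HasSum (fun k : ℕ => 1 / (((k : ℝ) + 1) * ((k : ℝ) + 2))) 1 := by
  convert hasSum_sub_succ_of_antitone (f := fun k : ℕ => 1 / ((k : ℝ) + 1))
    (fun a b hab => by dsimp only; gcongr) tendsto_one_div_add_atTop_nhds_zero_nat using 1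
  · ext k; push_cast; field_simp; ring
  · simp

lemma hasSum_one_div_succ_sq_mul_succ_succ :
    HasSum (fun k : ℕ => 1 / (((k : ℝ) + 1) ^ 2 * ((k : ℝ) + 2))) (π ^ 2 / 6 - 1) := by
  have hterm : ∀ k : ℕ, 1 / (((k : ℝ) + 1) ^ 2 * ((k : ℝ) + 2))
      = 1 / ((k : ℝ) + 1) ^ 2 - 1 / (((k : ℝ) + 1) * ((k : ℝ) + 2)) := fun k => by
    field_simp; ring
  simp only [hterm]
  exact hasSum_one_div_succ_sq.sub hasSum_one_div_succ_mul_succ_succ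

lemma hasSum_one_div_succ_mul_succ_succ_mul_succ_succ_succ :
    HasSum (fun k : ℕ => 1 / (((k : ℝ) + 1) * ((k : ℝ) + 2) * ((k : ℝ) + 3))) (1 / 4) := by
  have hlim : Tendsto (fun k : ℕ => 1 / (2 * ((k : ℝ) + 1) * ((k : ℝ) + 2))) atTop (𝓝 0) :=
    squeeze_zero (fun k => by positivity)
      (fun k => one_div_le_one_div_of_le (by positivity) (by nlinarith))
      tendsto_one_div_add_atTop_nhds_zero_nat
  convert hasSum_sub_succ_of_antitone (fun a b hab => by gcongr) hlim using 1
  · ext k; push_cast; field_simp; ring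
  · norm_num

end Series

section ExponentialMoments

variable {θ : ℝ}

lemma exp_neg_div_mem_Ioo (hθ : 0 < θ) {y : ℝ} (hy : 0 < y) : exp (-y / θ) ∈ Ioo 0 1 :=
  ⟨exp_pos _, exp_lt_one_iff.2 (div_neg_of_neg_of_pos (neg_lt_zero.2 hy) hθ)⟩

lemma exp_neg_div_pow_eq (θ y : ℝ) (j : ℕ) : exp (-y / θ) ^ j = exp (-(j / θ) * y) := by
  rw [← exp_nat_mul]; ring_nf

lemma integrableOn_exp_neg_div_pow (hθ : 0 < θ) {j : ℕ} (hj : j ≠ 0) :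
    IntegrableOn (fun y : ℝ => exp (-y / θ) ^ j) (Ioi 0) := by
  have : (0 : ℝ) < j := Nat.cast_pos.2 (Nat.pos_of_ne_zero hj)
  simp_rw [exp_neg_div_pow_eq]
  exact integrableOn_exp_mul_Ioi (neg_neg_of_pos (by positivity)) 0

lemma integral_exp_neg_div_pow (hθ : 0 < θ) {j : ℕ} (hj : j ≠ 0) :
    ∫ y in Ioi (0 : ℝ), exp (-y / θ) ^ j = θ / j := by
  have : (0 : ℝ) < j := Nat.cast_pos.2 (Nat.pos_of_ne_zero hj)
  simp_rw [exp_neg_div_pow_eq]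
  rw [integral_exp_mul_Ioi (neg_neg_of_pos (by positivity))]
  simp [field]

end ExponentialMoments

section CumulativeEntropy

lemma hasSum_pow_mul_negMulLog_one_sub {x : ℝ} (h0 : 0 ≤ x) (h1 : x < 1) (j : ℕ) :
    HasSum (fun k : ℕ => (x ^ (k + j + 1) - x ^ (k + j + 2)) / ((k : ℝ) + 1))
      (x ^ j * negMulLog (1 - x)) := by
  have hx : |x| < 1 := by rwa [abs_of_nonneg h0]
  have hterm : ∀ k : ℕ, (x ^ (k + j + 1) - x ^ (k + j + 2)) / ((k : ℝ) + 1)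
      = x ^ j * (1 - x) * (x ^ (k + 1) / ((k : ℝ) + 1)) := fun k => by ring
  simp only [hterm, negMulLog, show x ^ j * (-(1 - x) * log (1 - x))
    = x ^ j * (1 - x) * -log (1 - x) by ring]
  exact (hasSum_pow_div_log_of_abs_lt_one hx).mul_left _

variable {θ : ℝ}

lemma integrableOn_exp_neg_div_pow_mul_negMulLog (hθ : 0 < θ) (j : ℕ) :
    IntegrableOn (fun y : ℝ => exp (-y / θ) ^ j * negMulLog (1 - exp (-y / θ))) (Ioi 0) := by
  refine Integrable.mono'
    (by simpa [IntegrableOn] using integrableOn_exp_neg_div_pow hθ one_ne_zero) (by fun_prop)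
    ((ae_restrict_mem measurableSet_Ioi).mono fun y hy => ?_)
  obtain ⟨hu0, hu1⟩ := exp_neg_div_mem_Ioo hθ hy
  have hent := negMulLog_nonneg (x := 1 - exp (-y / θ)) (by linarith) (by linarith)
  rw [Real.norm_of_nonneg (mul_nonneg (by positivity) hent)]
  calc _ ≤ 1 * (1 - (1 - exp (-y / θ))) :=
        mul_le_mul (pow_le_one₀ hu0.le hu1.le) (negMulLog_le_one_sub_self (by linarith))
          hent zero_le_one
    _ = exp (-y / θ) := by ring

lemma hasSum_integral_exp_neg_div_pow_mul_negMulLog (hθ : 0 < θ) (j : ℕ) :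
    HasSum (fun k : ℕ => θ / (((k : ℝ) + 1) * ((k : ℝ) + j + 1) * ((k : ℝ) + j + 2)))
      (∫ y in Ioi (0 : ℝ), exp (-y / θ) ^ j * negMulLog (1 - exp (-y / θ))) := by
  set g : ℕ → ℝ → ℝ := fun k y =>
    (exp (-y / θ) ^ (k + j + 1) - exp (-y / θ) ^ (k + j + 2)) / ((k : ℝ) + 1)
  have hg_int : ∀ k, IntegrableOn (g k) (Ioi 0) := fun k =>
    ((integrableOn_exp_neg_div_pow hθ (by omega)).sub
      (integrableOn_exp_neg_div_pow hθ (by omega))).div_const _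
  have hg_integral : ∀ k, ∫ y in Ioi (0 : ℝ), g k y
      = θ / (((k : ℝ) + 1) * ((k : ℝ) + j + 1) * ((k : ℝ) + j + 2)) := fun k => by
    rw [integral_div, integral_sub (integrableOn_exp_neg_div_pow hθ (by omega))
      (integrableOn_exp_neg_div_pow hθ (by omega)), integral_exp_neg_div_pow hθ (by omega),
      integral_exp_neg_div_pow hθ (by omega)]
    push_cast
    field_simp
    ring
  have hg_nonneg : ∀ k, ∀ y ∈ Ioi (0 : ℝ), 0 ≤ g k y := fun k y hy => by
    obtain ⟨hu0, hu1⟩ := exp_neg_div_mem_Ioo hθ hy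
    exact div_nonneg (sub_nonneg.2 (pow_le_pow_of_le_one hu0.le hu1.le (by omega)))
      (by positivity)
  have hg_norm : ∀ k, ∫ y in Ioi (0 : ℝ), ‖g k y‖
      = θ / (((k : ℝ) + 1) * ((k : ℝ) + j + 1) * ((k : ℝ) + j + 2)) := fun k => by
    rw [← hg_integral k]
    exact setIntegral_congr_fun measurableSet_Ioi fun y hy =>
      Real.norm_of_nonneg (hg_nonneg k y hy)
  have hsummable : Summable fun k : ℕ =>
      θ / (((k : ℝ) + 1) * ((k : ℝ) + j + 1) * ((k : ℝ) + j + 2)) := by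
    refine (hasSum_one_div_succ_sq.summable.mul_left θ).of_nonneg_of_le
      (fun k => by positivity) fun k => ?_
    rw [mul_one_div]
    refine div_le_div_of_nonneg_left hθ.le (by positivity) ?_
    calc ((k : ℝ) + 1) ^ 2 = ((k : ℝ) + 1) * ((k : ℝ) + 1) * 1 := by ring
      _ ≤ ((k : ℝ) + 1) * ((k : ℝ) + j + 1) * ((k : ℝ) + j + 2) := by gcongr <;> linarith
  have h := hasSum_integral_of_summable_integral_norm hg_int (by simpa only [hg_norm])
  simp only [hg_integral] at h
  rwa [setIntegral_congr_fun measurableSet_Ioi fun y hy =>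
    (hasSum_pow_mul_negMulLog_one_sub (exp_neg_div_mem_Ioo hθ hy).1.le
      (exp_neg_div_mem_Ioo hθ hy).2 j).tsum_eq] at h

lemma integral_negMulLog_one_sub_exp_neg_div (hθ : 0 < θ) :
    ∫ y in Ioi (0 : ℝ), negMulLog (1 - exp (-y / θ)) = (π ^ 2 / 6 - 1) * θ := by
  have h := hasSum_integral_exp_neg_div_pow_mul_negMulLog hθ 0
  have hterm : ∀ k : ℕ, θ / (((k : ℝ) + 1) * ((k : ℝ) + 0 + 1) * ((k : ℝ) + 0 + 2))
      = θ * (1 / (((k : ℝ) + 1) ^ 2 * ((k : ℝ) + 2))) := fun k => by ring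
  simp only [Nat.cast_zero, hterm, pow_zero, one_mul] at h
  rw [mul_comm]
  exact h.unique (hasSum_one_div_succ_sq_mul_succ_succ.mul_left θ)

lemma integral_exp_neg_div_mul_negMulLog_one_sub_exp_neg_div (hθ : 0 < θ) :
    ∫ y in Ioi (0 : ℝ), exp (-y / θ) * negMulLog (1 - exp (-y / θ)) = θ / 4 := by
  have h := hasSum_integral_exp_neg_div_pow_mul_negMulLog hθ 1
  have hterm : ∀ k : ℕ, θ / (((k : ℝ) + 1) * ((k : ℝ) + 1 + 1) * ((k : ℝ) + 1 + 2))
      = θ * (1 / (((k : ℝ) + 1) * ((k : ℝ) + 2) * ((k : ℝ) + 3))) := fun k => by ring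
  simp only [Nat.cast_one, hterm, pow_one] at h
  rw [h.unique (hasSum_one_div_succ_mul_succ_succ_mul_succ_succ_succ.mul_left θ)]
  ring

end CumulativeEntropy

theorem stmt_15_general (θ₂ α : ℝ) (hθ : 0 < θ₂)
    (n r : ℕ)
    (F : ℝ → ℝ) (hF : ∀ y, F y = 1 - exp (-y / θ₂))
    (G : ℝ → ℝ)
    (hG : ∀ y, G y = F y * (1 + α * (((n : ℝ) - 2 * r + 1) / ((n : ℝ) + 1)) * (1 - F y))) :
    (-∫ y in Ioi (0:ℝ), G y * log (F y)
        = (π ^ 2 / 6 - 1) * θ₂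
          + (α * θ₂ / 4) * (((n : ℝ) - 2 * r + 1) / ((n : ℝ) + 1)))
    ∧ (-∫ y in Ioi (0:ℝ), F y * log (F y) = (π ^ 2 / 6 - 1) * θ₂)
    ∧ (-∫ y in Ioi (0:ℝ), (F y) ^ 2 * log (F y) = (π ^ 2 / 6 - 5 / 4) * θ₂) := by
  set c := α * (((n : ℝ) - 2 * r + 1) / ((n : ℝ) + 1))
  set u := fun y : ℝ => exp (-y / θ₂)
  have hint₀ := integrableOn_exp_neg_div_pow_mul_negMulLog hθ 0
  have hint₁ := integrableOn_exp_neg_div_pow_mul_negMulLog hθ 1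
  simp only [pow_zero, one_mul, pow_one] at hint₀ hint₁
  have hF₁ : ∀ y, F y * log (F y) = -negMulLog (1 - u y) := fun y => by
    simp only [hF, negMulLog, u]; ring
  have hF₂ : ∀ y, F y ^ 2 * log (F y) = -(negMulLog (1 - u y) - u y * negMulLog (1 - u y)) :=
    fun y => by simp only [hF, negMulLog, u]; ring
  have hGF : ∀ y, G y * log (F y) = -(negMulLog (1 - u y) + c * (u y * negMulLog (1 - u y))) :=
    fun y => by simp only [hG, hF, negMulLog, u]; ring
  simp only [hF₁, hF₂, hGF, integral_neg, neg_neg]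
  rw [integral_add hint₀ (hint₁.const_mul c), integral_sub hint₀ hint₁, integral_const_mul,
    integral_negMulLog_one_sub_exp_neg_div hθ,
    integral_exp_neg_div_mul_negMulLog_one_sub_exp_neg_div hθ]
  exact ⟨by ring, rfl, by ring⟩

/-- For the exponential distribution with mean θ₂,
`I(F_{Y[r:n]}, F_Y) = (π²/6 − 1)θ₂ + (αθ₂/4)(n−2r+1)/(n+1)`; in particular
`CE(Y) = (π²/6 − 1)θ₂` and `−∫₀^∞ F² log F = (π²/6 − 5/4)θ₂`. -/
theorem stmt_15 (θ₂ α : ℝ) (hθ : 0 < θ₂) (hα : |α| ≤ 1)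
    (n r : ℕ) (hr1 : 1 ≤ r) (hrn : r ≤ n)
    (F : ℝ → ℝ) (hF : ∀ y, F y = 1 - exp (-y / θ₂))
    (G : ℝ → ℝ)
    (hG : ∀ y, G y = F y * (1 + α * (((n : ℝ) - 2 * r + 1) / ((n : ℝ) + 1)) * (1 - F y))) :
    (-∫ y in Ioi (0:ℝ), G y * log (F y)
        = (π ^ 2 / 6 - 1) * θ₂
          + (α * θ₂ / 4) * (((n : ℝ) - 2 * r + 1) / ((n : ℝ) + 1)))
    ∧ (-∫ y in Ioi (0:ℝ), F y * log (F y) = (π ^ 2 / 6 - 1) * θ₂)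
    ∧ (-∫ y in Ioi (0:ℝ), (F y) ^ 2 * log (F y) = (π ^ 2 / 6 - 5 / 4) * θ₂) :=
  stmt_15_general θ₂ α hθ n r F hF G hG
end

section
/- For the Fréchet (inverse Weibull) distribution F(y) = exp(−(θ₂/y)^{β₂}) with β₂ > 1, I(F_{Y_{[r:n]}}, F_Y) = (θ₂/β₂)Γ((β₂−1)/β₂) + α((n−2r+1)/(n+1))·(θ₂/β₂)Γ((β₂−1)/β₂)(1 − 2^{1/β₂ − 1}). In particular CE(Y) = (θ₂/β₂)Γ((β₂−1)/β₂) and −∫₀^∞ F² log F dy = (2^{1/β₂−1}θ₂/β₂)Γ((β₂−1)/β₂). -/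
open MeasureTheory Real Set

/-!
Since `log F = -(θ/y)^β` on `(0, ∞)`, we have `-F^m log F = (θ/y)^β exp(-m (θ/y)^β)`, and the
substitution `u = y^(-β)` turns its integral into the Gamma integral
`∫₀^∞ u^(-1/β) e^(-m θ^β u) du = (m θ^β)^(1/β - 1) Γ((β-1)/β)`.
The order-statistic distribution `G = (1 + c) F - c F²` is linear in `F` and `F²`, so all three
claims follow from the cases `m = 1` and `m = 2`.
-/

section FrechetIntegral

variable {θ β k : ℝ}

lemma rpow_div_mul_exp_eq_comp_rpow_neg (hθ : 0 < θ) (hβ : 0 < β) {x : ℝ} (hx : 0 < x) :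
    (|-β| * x ^ (-β - 1)) • (θ ^ β / β * ((x ^ (-β)) ^ (-1 / β) * exp (-(k * θ ^ β) * x ^ (-β))))
      = (θ / x) ^ β * exp (-(k * (θ / x) ^ β)) := by
  have hinv : (x ^ (-β)) ^ (-1 / β) = x := by
    rw [← rpow_mul hx.le, show -β * (-1 / β) = 1 by field_simp, rpow_one]
  have hdiv : (θ / x) ^ β = θ ^ β * x ^ (-β) := by
    rw [div_rpow hθ.le hx.le, rpow_neg hx.le, div_eq_mul_inv]
  have hsucc : x ^ (-β) = x ^ (-β - 1) * x := by
    rw [← rpow_add_one hx.ne' (-β - 1)]; norm_num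
  rw [smul_eq_mul, abs_neg, abs_of_pos hβ, hinv, hdiv, neg_mul, mul_assoc, hsucc]
  field_simp

lemma integrableOn_rpow_div_mul_exp (hθ : 0 < θ) (hβ : 1 < β) (hk : 0 < k) :
    IntegrableOn (fun y => (θ / y) ^ β * exp (-(k * (θ / y) ^ β))) (Ioi 0) := by
  have hβ0 : 0 < β := one_pos.trans hβ
  have hgamma : IntegrableOn (fun u : ℝ => u ^ (-1 / β) * exp (-(k * θ ^ β) * u)) (Ioi 0) := by
    simpa only [rpow_one] using integrableOn_rpow_mul_exp_neg_mul_rpow (p := 1)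
      (by rw [neg_div, neg_lt_neg_iff, div_lt_one hβ0]; exact hβ) one_pos (by positivity)
  refine ((integrableOn_Ioi_comp_rpow_iff _ (neg_ne_zero.mpr hβ0.ne')).mpr
    (hgamma.const_mul (θ ^ β / β))).congr_fun (fun x hx => ?_) measurableSet_Ioi
  exact rpow_div_mul_exp_eq_comp_rpow_neg hθ hβ0 hx

lemma integral_rpow_div_mul_exp (hθ : 0 < θ) (hβ : 1 < β) (hk : 0 < k) :
    ∫ y in Ioi (0:ℝ), (θ / y) ^ β * exp (-(k * (θ / y) ^ β))
      = θ / β * k ^ (1 / β - 1) * Gamma ((β - 1) / β) := by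
  have hβ0 : 0 < β := one_pos.trans hβ
  have hgamma : ∫ u in Ioi (0:ℝ), u ^ (-1 / β) * exp (-(k * θ ^ β) * u)
      = (k * θ ^ β) ^ (1 / β - 1) * Gamma ((β - 1) / β) := by
    have := integral_rpow_mul_exp_neg_mul_rpow (p := 1) (q := -1 / β) one_pos
      (by rw [neg_div, neg_lt_neg_iff, div_lt_one hβ0]; exact hβ) (by positivity : 0 < k * θ ^ β)
    simp only [rpow_one, div_one] at this
    rw [this, show -(-1 / β + 1) = 1 / β - 1 by ring,
      show -1 / β + 1 = (β - 1) / β by field_simp; ring, mul_one]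
  have hθpow : θ ^ β * θ ^ (1 - β) = θ := by rw [← rpow_add hθ]; norm_num
  calc ∫ y in Ioi (0:ℝ), (θ / y) ^ β * exp (-(k * (θ / y) ^ β))
      = ∫ x in Ioi (0:ℝ), (|-β| * x ^ (-β - 1)) •
          (θ ^ β / β * ((x ^ (-β)) ^ (-1 / β) * exp (-(k * θ ^ β) * x ^ (-β)))) :=
        (setIntegral_congr_fun measurableSet_Ioi
          fun x hx => rpow_div_mul_exp_eq_comp_rpow_neg hθ hβ0 hx).symm
    _ = θ ^ β / β * ∫ u in Ioi (0:ℝ), u ^ (-1 / β) * exp (-(k * θ ^ β) * u) := by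
        rw [integral_comp_rpow_Ioi (fun u => θ ^ β / β * (u ^ (-1 / β) *
          exp (-(k * θ ^ β) * u))) (neg_ne_zero.mpr hβ0.ne'), integral_const_mul]
    _ = θ / β * k ^ (1 / β - 1) * Gamma ((β - 1) / β) := by
        rw [hgamma, mul_rpow hk.le (by positivity), ← rpow_mul hθ.le,
          show β * (1 / β - 1) = 1 - β by field_simp]
        linear_combination k ^ (1 / β - 1) * Gamma ((β - 1) / β) / β * hθpow

end FrechetIntegral

lemma exp_neg_pow_mul_log_exp_neg (m : ℕ) (t : ℝ) :
    exp (-t) ^ m * log (exp (-t)) = -(t * exp (-(m * t))) := by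
  rw [log_exp, ← exp_nat_mul]
  ring_nf

section FrechetDistribution

variable {θ β : ℝ} {F : ℝ → ℝ}

lemma frechet_pow_mul_log_eqOn (hF : ∀ y ∈ Ioi (0:ℝ), F y = exp (-(θ / y) ^ β)) (m : ℕ) :
    EqOn (fun y => F y ^ m * log (F y))
      (fun y => -((θ / y) ^ β * exp (-(m * (θ / y) ^ β)))) (Ioi 0) := fun y hy => by
  simp only [hF y hy, exp_neg_pow_mul_log_exp_neg]

lemma integrableOn_frechet_pow_mul_log (hθ : 0 < θ) (hβ : 1 < β)
    (hF : ∀ y ∈ Ioi (0:ℝ), F y = exp (-(θ / y) ^ β)) {m : ℕ} (hm : 0 < m) :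
    IntegrableOn (fun y => F y ^ m * log (F y)) (Ioi 0) :=
  (integrableOn_congr_fun (frechet_pow_mul_log_eqOn hF m) measurableSet_Ioi).mpr
    (integrableOn_rpow_div_mul_exp hθ hβ (Nat.cast_pos.mpr hm)).neg

lemma integral_frechet_pow_mul_log (hθ : 0 < θ) (hβ : 1 < β)
    (hF : ∀ y ∈ Ioi (0:ℝ), F y = exp (-(θ / y) ^ β)) {m : ℕ} (hm : 0 < m) :
    ∫ y in Ioi (0:ℝ), F y ^ m * log (F y) = -(θ / β * (m : ℝ) ^ (1 / β - 1) * Gamma ((β - 1) / β)) := by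
  rw [setIntegral_congr_fun measurableSet_Ioi (frechet_pow_mul_log_eqOn hF m), integral_neg,
    integral_rpow_div_mul_exp hθ hβ (Nat.cast_pos.mpr hm)]

end FrechetDistribution

theorem stmt_16_general (θ₂ β₂ α : ℝ) (hθ : 0 < θ₂) (hβ : 1 < β₂)
    (n r : ℕ)
    (F : ℝ → ℝ) (hF : ∀ y ∈ Ioi (0:ℝ), F y = exp (-(θ₂ / y) ^ β₂))
    (G : ℝ → ℝ)
    (hG : ∀ y, G y = F y * (1 + α * (((n : ℝ) - 2 * r + 1) / ((n : ℝ) + 1)) * (1 - F y))) :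
    (-∫ y in Ioi (0:ℝ), G y * log (F y)
        = (θ₂ / β₂) * Real.Gamma ((β₂ - 1) / β₂)
          + α * (((n : ℝ) - 2 * r + 1) / ((n : ℝ) + 1))
            * ((θ₂ / β₂) * Real.Gamma ((β₂ - 1) / β₂)) * (1 - (2 : ℝ) ^ (1 / β₂ - 1)))
    ∧ (-∫ y in Ioi (0:ℝ), F y * log (F y) = (θ₂ / β₂) * Real.Gamma ((β₂ - 1) / β₂))
    ∧ (-∫ y in Ioi (0:ℝ), (F y) ^ 2 * log (F y)
        = ((2 : ℝ) ^ (1 / β₂ - 1) * θ₂ / β₂) * Real.Gamma ((β₂ - 1) / β₂)) := by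
  set c := α * (((n : ℝ) - 2 * r + 1) / ((n : ℝ) + 1))
  have I1 : ∫ y in Ioi (0:ℝ), F y * log (F y) = -(θ₂ / β₂ * Gamma ((β₂ - 1) / β₂)) := by
    simpa using integral_frechet_pow_mul_log hθ hβ hF one_pos
  have I2 := integral_frechet_pow_mul_log hθ hβ hF two_pos
  have hsplit : ∫ y in Ioi (0:ℝ), G y * log (F y)
      = (1 + c) * (∫ y in Ioi (0:ℝ), F y ^ 1 * log (F y))
        - c * ∫ y in Ioi (0:ℝ), F y ^ 2 * log (F y) := by
    rw [← integral_const_mul, ← integral_const_mul,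
      ← integral_sub ((integrableOn_frechet_pow_mul_log hθ hβ hF one_pos).const_mul _)
        ((integrableOn_frechet_pow_mul_log hθ hβ hF two_pos).const_mul _)]
    refine integral_congr_ae (Filter.Eventually.of_forall fun y => ?_)
    simp only [hG]
    ring
  simp only [pow_one] at hsplit
  rw [hsplit, I1, I2]
  push_cast
  refine ⟨by ring, by ring, by ring⟩

/-- For the Fréchet (inverse Weibull) distribution
`F(y) = exp(−(θ₂/y)^{β₂})`, `β₂ > 1`,
`I(F_{Y[r:n]}, F_Y) = (θ₂/β₂)Γ((β₂−1)/β₂)(1 + α((n−2r+1)/(n+1))(1 − 2^{1/β₂−1}))`;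
in particular `CE(Y) = (θ₂/β₂)Γ((β₂−1)/β₂)` and
`−∫₀^∞ F² log F = (2^{1/β₂−1} θ₂/β₂)Γ((β₂−1)/β₂)`. -/
theorem stmt_16 (θ₂ β₂ α : ℝ) (hθ : 0 < θ₂) (hβ : 1 < β₂) (hα : |α| ≤ 1)
    (n r : ℕ) (hr1 : 1 ≤ r) (hrn : r ≤ n)
    (F : ℝ → ℝ) (hF : ∀ y ∈ Ioi (0:ℝ), F y = exp (-(θ₂ / y) ^ β₂))
    (G : ℝ → ℝ)
    (hG : ∀ y, G y = F y * (1 + α * (((n : ℝ) - 2 * r + 1) / ((n : ℝ) + 1)) * (1 - F y))) :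
    (-∫ y in Ioi (0:ℝ), G y * log (F y)
        = (θ₂ / β₂) * Real.Gamma ((β₂ - 1) / β₂)
          + α * (((n : ℝ) - 2 * r + 1) / ((n : ℝ) + 1))
            * ((θ₂ / β₂) * Real.Gamma ((β₂ - 1) / β₂)) * (1 - (2 : ℝ) ^ (1 / β₂ - 1)))
    ∧ (-∫ y in Ioi (0:ℝ), F y * log (F y) = (θ₂ / β₂) * Real.Gamma ((β₂ - 1) / β₂))
    ∧ (-∫ y in Ioi (0:ℝ), (F y) ^ 2 * log (F y)
        = ((2 : ℝ) ^ (1 / β₂ - 1) * θ₂ / β₂) * Real.Gamma ((β₂ - 1) / β₂)) :=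
  stmt_16_general θ₂ β₂ α hθ hβ n r F hF G hG
end

section
/- Let Y be a nonnegative random variable with cdf F and finite cumulative entropy CE(Y) = −∫₀^∞ F log F dy. For 1 ≤ r ≤ (n+1)/2 and −1 ≤ α < 0 one has I(F_{Y_{[r:n]}}, F_Y) ≤ CE(Y), while for 0 < α ≤ 1 one has I(F_{Y_{[r:n]}}, F_Y) ≥ CE(Y). -/
open MeasureTheory Real Set

/-- For `1 ≤ r ≤ (n+1)/2`, the cumulative past inaccuracy of the
concomitant of the rth order statistic satisfies `I(F_{Y[r:n]}, F_Y) ≤ CE(Y)` when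
`−1 ≤ α < 0` and `I(F_{Y[r:n]}, F_Y) ≥ CE(Y)` when `0 < α ≤ 1`. -/
theorem stmt_17 (F : ℝ → ℝ) (α : ℝ)
    (n r : ℕ) (hr1 : 1 ≤ r) (hrn : r ≤ n) (hr2 : 2 * r ≤ n + 1)
    (hF_mono : Monotone F) (hF01 : ∀ y, 0 ≤ F y ∧ F y ≤ 1)
    (G : ℝ → ℝ)
    (hG : ∀ y, G y = F y * (1 + α * (((n : ℝ) - 2 * r + 1) / ((n : ℝ) + 1)) * (1 - F y)))
    (CE : ℝ) (hCE : CE = -∫ y in Ioi (0:ℝ), F y * log (F y))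
    (hint1 : IntegrableOn (fun y => F y * log (F y)) (Ioi 0))
    (hint2 : IntegrableOn (fun y => (F y) ^ 2 * log (F y)) (Ioi 0)) :
    (-1 ≤ α → α < 0 → -∫ y in Ioi (0:ℝ), G y * log (F y) ≤ CE)
    ∧ (0 < α → α ≤ 1 → CE ≤ -∫ y in Ioi (0:ℝ), G y * log (F y)) := by
  set k : ℝ := ((n : ℝ) - 2 * r + 1) / ((n : ℝ) + 1) with hk
  have hk0 : 0 ≤ k := by
    apply div_nonneg
    · have : (2 * r : ℝ) ≤ (n : ℝ) + 1 := by exact_mod_cast hr2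
      linarith
    · positivity
  set c : ℝ := α * k with hc
  have key : ∀ y, G y * log (F y)
      = F y * log (F y) + c * (F y * log (F y) - (F y) ^ 2 * log (F y)) := by
    intro y; rw [hG]; ring
  have hsplit : (∫ y in Ioi (0:ℝ), G y * log (F y))
      = (∫ y in Ioi (0:ℝ), F y * log (F y))
        + c * ((∫ y in Ioi (0:ℝ), F y * log (F y))
          - (∫ y in Ioi (0:ℝ), (F y) ^ 2 * log (F y))) := by
    simp_rw [key]
    have e1 : IntegrableOn
        (fun y => c * (F y * log (F y) - (F y) ^ 2 * log (F y))) (Ioi 0) :=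
      (hint1.sub hint2).const_mul c
    rw [integral_add hint1 e1, integral_const_mul c _, integral_sub hint1 hint2]
  have hJ : (∫ y in Ioi (0:ℝ), F y * log (F y))
      - (∫ y in Ioi (0:ℝ), (F y) ^ 2 * log (F y)) ≤ 0 := by
    rw [← integral_sub hint1 hint2]
    apply integral_nonpos
    intro y
    show F y * log (F y) - (F y) ^ 2 * log (F y) ≤ 0
    have h0 := (hF01 y).1
    have h1 := (hF01 y).2
    have hlog : log (F y) ≤ 0 := by
      rcases eq_or_lt_of_le h0 with h | h
      · simp [← h]
      · exact Real.log_nonpos (le_of_lt h) h1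
    have : F y * log (F y) - (F y) ^ 2 * log (F y)
        = (F y * (1 - F y)) * log (F y) := by ring
    rw [this]
    exact mul_nonpos_of_nonneg_of_nonpos (by nlinarith) hlog
  constructor
  · intro _ hα
    have hc0 : c ≤ 0 := mul_nonpos_of_nonpos_of_nonneg hα.le hk0
    rw [hCE, hsplit]
    nlinarith
  · intro hα _
    have hc0 : 0 ≤ c := mul_nonneg hα.le hk0
    rw [hCE, hsplit]
    nlinarith
end
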